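/- Lemma (uniform bound on log-ratio differences): In the setting of the ε-bound lemma, fix 1 ≤ l ≤ n, assume M < 1 and R_{(l,n)} ≥ M/(2(1−M)), and set a = M + M/R_{(l,n)} + M/R_{(l,n)}². If a < 1, then for all 1 ≤ i ≤ l: |log(E_{(i,n)}/E_{(l,n)}) − log(R_{(i,n)}/R_{(l,n)})| ≤ log(1/(1−a)). -/

import Mathlib

/-!
For each sample point, expanding both quadratic forms around `x` bounds `|E² - R²|` by a
quadratic in `‖x‖`, and `‖x - μ‖ ≤ √λ_max R` turns this into `|E² - R²| ≤ δ(R)`. The bound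
passes to order statistics because `x ↦ x² + δ(x)` is increasing on `[0, ∞)` and
`x ↦ x² - δ(x) = (1 - M) x² - M x - M` is increasing beyond its vertex `M / (2(1 - M))`.
Since `R_(l) ≤ R_(i)`, both `δ(R_(i)) ≤ a R_(i)²` and `δ(R_(l)) = a R_(l)²`, so the squared ratios
`E_(i)² / R_(i)²` and `E_(l)² / R_(l)²` lie in `[1 - a, 1 + a] ⊆ [1 - a, 1 / (1 - a)]`; the
log-ratio difference is half the difference of their logarithms.
-/

/-- Mahalanobis distance relative to `A`: `d_A(x,y) = ⟨x−y, A⁻¹(x−y)⟩^{1/2}`. -/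
noncomputable def mahalanobis {d : ℕ} (A : Matrix (Fin d) (Fin d) ℝ)
    (x y : EuclideanSpace ℝ (Fin d)) : ℝ :=
  Real.sqrt (inner ℝ (x - y)
    ((WithLp.equiv 2 (Fin d → ℝ)).symm (A⁻¹.mulVec (WithLp.equiv 2 (Fin d → ℝ) (x - y)))) : ℝ)

/-- Operator norm of a real matrix (as an operator on Euclidean space). -/
noncomputable def matOpNorm {d : ℕ} (A : Matrix (Fin d) (Fin d) ℝ) : ℝ :=
  ‖Matrix.toEuclideanCLM (𝕜 := ℝ) A‖

/-- The `i`-th (0-based) largest value among `r 0, …, r (n-1)` (decreasing order statistic). -/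
noncomputable def orderStatDesc {n : ℕ} (r : Fin n → ℝ) (i : ℕ) : ℝ :=
  ((List.ofFn r).mergeSort (fun a b => b ≤ a)).getD i 0

open scoped RealInnerProductSpace MatrixOrder

section QuadraticForm

variable {F : Type*} [NormedAddCommGroup F] [InnerProductSpace ℝ F]

lemma abs_inner_apply_le (T : F →L[ℝ] F) (u v : F) : |⟪u, T v⟫| ≤ ‖T‖ * ‖u‖ * ‖v‖ :=
  calc |⟪u, T v⟫| ≤ ‖u‖ * ‖T v‖ := abs_real_inner_le_norm u (T v)
    _ ≤ ‖u‖ * (‖T‖ * ‖v‖) := by gcongr; exact T.le_opNorm v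
    _ = ‖T‖ * ‖u‖ * ‖v‖ := by ring

lemma abs_inner_sub_apply_sub_sub_le (P Q : F →L[ℝ] F) (x μ ν : F) :
    |⟪x - ν, Q (x - ν)⟫ - ⟪x - μ, P (x - μ)⟫| ≤
      ‖P - Q‖ * ‖x‖ ^ 2 + ((‖ν‖ + ‖μ‖) * ‖P - Q‖ + (‖Q‖ + ‖P‖) * ‖μ - ν‖) * ‖x‖
        + (‖μ‖ ^ 2 * ‖P - Q‖ + (‖μ‖ + ‖ν‖) * ‖Q‖ * ‖μ - ν‖) := by
  have expand : ⟪x - ν, Q (x - ν)⟫ - ⟪x - μ, P (x - μ)⟫ =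
      -⟪x, (P - Q) x⟫ + ⟪x, (P - Q) μ⟫ + ⟪ν, (P - Q) x⟫ + ⟪x, Q (μ - ν)⟫ + ⟪μ - ν, P x⟫
        - ⟪μ - ν, Q μ⟫ - ⟪ν, Q (μ - ν)⟫ - ⟪μ, (P - Q) μ⟫ := by
    simp only [inner_sub_left, inner_sub_right, map_sub, sub_apply]
    ring
  obtain ⟨h₁, h₁'⟩ := abs_le.mp (abs_inner_apply_le (P - Q) x x)
  obtain ⟨h₂, h₂'⟩ := abs_le.mp (abs_inner_apply_le (P - Q) x μ)
  obtain ⟨h₃, h₃'⟩ := abs_le.mp (abs_inner_apply_le (P - Q) ν x)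
  obtain ⟨h₄, h₄'⟩ := abs_le.mp (abs_inner_apply_le Q x (μ - ν))
  obtain ⟨h₅, h₅'⟩ := abs_le.mp (abs_inner_apply_le P (μ - ν) x)
  obtain ⟨h₆, h₆'⟩ := abs_le.mp (abs_inner_apply_le Q (μ - ν) μ)
  obtain ⟨h₇, h₇'⟩ := abs_le.mp (abs_inner_apply_le Q ν (μ - ν))
  obtain ⟨h₈, h₈'⟩ := abs_le.mp (abs_inner_apply_le (P - Q) μ μ)
  rw [expand, abs_le]
  constructor <;> linarith

end QuadraticForm

section Mahalanobis

open Matrix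

lemma Matrix.PosDef.algebraMap_inv_le_inv {ι : Type*} [Fintype ι] [DecidableEq ι]
    {S : Matrix ι ι ℝ} (hS : S.PosDef) {c : ℝ} (hle : ∀ i, hS.isHermitian.eigenvalues i ≤ c) :
    algebraMap ℝ _ c⁻¹ ≤ S⁻¹ := by
  refine algebraMap_le_of_le_spectrum (fun x hx => ?_) hS.inv.isHermitian
  rw [show S⁻¹ = ↑(hS.isUnit.unit⁻¹) by rw [coe_units_inv, IsUnit.unit_spec],
    ← spectrum.map_inv, IsUnit.unit_spec, hS.isHermitian.spectrum_real_eq_range_eigenvalues] at hx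
  obtain ⟨i, hi⟩ := hx
  rw [← inv_inv x, ← hi]
  exact inv_anti₀ (hS.eigenvalues_pos i) (hle i)

lemma Matrix.PosDef.sq_norm_le_mul_inner_inv {ι : Type*} [Fintype ι] [DecidableEq ι]
    {S : Matrix ι ι ℝ} (hS : S.PosDef) {c : ℝ} (hc : 0 < c)
    (hle : ∀ i, hS.isHermitian.eigenvalues i ≤ c) (u : EuclideanSpace ℝ ι) :
    ‖u‖ ^ 2 ≤ c * ⟪u, toEuclideanCLM (𝕜 := ℝ) S⁻¹ u⟫ := by
  have h := (le_iff.mp (hS.algebraMap_inv_le_inv hle)).dotProduct_mulVec_nonneg (WithLp.ofLp u)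
  rw [star_trivial, sub_mulVec, dotProduct_sub, Algebra.algebraMap_eq_smul_one, smul_mulVec,
    dotProduct_smul, ← inner_toEuclideanCLM, ← inner_toEuclideanCLM, map_one, smul_eq_mul,
    sub_nonneg, one_apply_eq_self, real_inner_self_eq_norm_sq] at h
  exact (inv_mul_le_iff₀ hc).mp h

variable {d : ℕ}

lemma mahalanobis_nonneg (S : Matrix (Fin d) (Fin d) ℝ) (x y : EuclideanSpace ℝ (Fin d)) :
    0 ≤ mahalanobis S x y :=
  Real.sqrt_nonneg _

lemma sq_mahalanobis {S : Matrix (Fin d) (Fin d) ℝ} (hS : S.PosDef)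
    (x y : EuclideanSpace ℝ (Fin d)) :
    mahalanobis S x y ^ 2 = ⟪x - y, toEuclideanCLM (𝕜 := ℝ) S⁻¹ (x - y)⟫ := by
  have h := hS.inv.posSemidef.dotProduct_mulVec_nonneg (WithLp.ofLp (x - y))
  rw [star_trivial, ← inner_toEuclideanCLM] at h
  exact Real.sq_sqrt h

lemma norm_sub_le_sqrt_mul_mahalanobis {S : Matrix (Fin d) (Fin d) ℝ} (hS : S.PosDef) {c : ℝ}
    (hc : 0 < c) (hle : ∀ i, hS.isHermitian.eigenvalues i ≤ c) (x y : EuclideanSpace ℝ (Fin d)) :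
    ‖x - y‖ ≤ √c * mahalanobis S x y := by
  rw [← Real.sqrt_sq (norm_nonneg (x - y)), ← Real.sqrt_sq (mahalanobis_nonneg S x y),
    ← Real.sqrt_mul hc.le, sq_mahalanobis hS]
  exact Real.sqrt_le_sqrt (hS.sq_norm_le_mul_inner_inv hc hle (x - y))

theorem abs_sq_mahalanobis_sub_le {S Shat : Matrix (Fin d) (Fin d) ℝ} (hS : S.PosDef)
    (hShat : Shat.PosDef) {lam : ℝ} (hlam : 0 < lam)
    (hle : ∀ i, hS.isHermitian.eigenvalues i ≤ lam) {μ μhat : EuclideanSpace ℝ (Fin d)}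
    {A B C M : ℝ} (hA : A = matOpNorm (S⁻¹ - Shat⁻¹))
    (hB : B = (‖μhat‖ + ‖μ‖) * matOpNorm (S⁻¹ - Shat⁻¹)
      + (matOpNorm Shat⁻¹ + matOpNorm S⁻¹) * ‖μ - μhat‖)
    (hC : C = ‖μ‖ ^ 2 * matOpNorm (S⁻¹ - Shat⁻¹)
      + (‖μ‖ + ‖μhat‖) * matOpNorm Shat⁻¹ * ‖μ - μhat‖)
    (hMA : lam * A ≤ M) (hMB : √lam * (2 * ‖μ‖ * A + B) ≤ M)
    (hMC : A * ‖μ‖ ^ 2 + B * ‖μ‖ + C ≤ M) (x : EuclideanSpace ℝ (Fin d)) :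
    |mahalanobis Shat x μhat ^ 2 - mahalanobis S x μ ^ 2|
      ≤ M * mahalanobis S x μ ^ 2 + M * mahalanobis S x μ + M := by
  have hquad : |mahalanobis Shat x μhat ^ 2 - mahalanobis S x μ ^ 2|
      ≤ A * ‖x‖ ^ 2 + B * ‖x‖ + C := by
    have h := abs_inner_sub_apply_sub_sub_le (toEuclideanCLM (𝕜 := ℝ) S⁻¹)
      (toEuclideanCLM (𝕜 := ℝ) Shat⁻¹) x μ μhat
    rw [← map_sub, ← sq_mahalanobis hS, ← sq_mahalanobis hShat] at h
    rwa [hA, hB, hC]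
  have hA0 : 0 ≤ A := hA ▸ norm_nonneg _
  have hB0 : 0 ≤ B := by rw [hB]; unfold matOpNorm; positivity
  have hr := mahalanobis_nonneg S x μ
  have hx : ‖x‖ ≤ √lam * mahalanobis S x μ + ‖μ‖ := (norm_le_norm_sub_add x μ).trans <| by
    gcongr
    exact norm_sub_le_sqrt_mul_mahalanobis hS hlam hle x μ
  calc _ ≤ A * ‖x‖ ^ 2 + B * ‖x‖ + C := hquad
    _ ≤ A * (√lam * mahalanobis S x μ + ‖μ‖) ^ 2 + B * (√lam * mahalanobis S x μ + ‖μ‖) + C := by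
        gcongr
    _ = √lam ^ 2 * A * mahalanobis S x μ ^ 2 + √lam * (2 * ‖μ‖ * A + B) * mahalanobis S x μ
        + (A * ‖μ‖ ^ 2 + B * ‖μ‖ + C) := by ring
    _ ≤ M * mahalanobis S x μ ^ 2 + M * mahalanobis S x μ + M := by
        rw [Real.sq_sqrt hlam.le]; gcongr

end Mahalanobis

section OrderStatistics

open Finset

lemma List.SortedGE.le_getElem_iff_lt_countP {α : Type*} [LinearOrder α] {l : List α}
    (hl : l.SortedGE) {i : ℕ} (hi : i < l.length) (t : α) :
    t ≤ l[i] ↔ i < l.countP (fun x => t ≤ x) := by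
  constructor
  · intro ht
    have htake : (l.take (i + 1)).countP (fun x => t ≤ x) = i + 1 := by
      rw [List.countP_eq_length.mpr, List.length_take, min_eq_left hi]
      intro x hx
      obtain ⟨j, hj, rfl⟩ := List.mem_take_iff_getElem.mp hx
      exact decide_eq_true (ht.trans (hl.getElem_ge_getElem_of_le (by omega)))
    rw [Nat.lt_iff_add_one_le, ← htake]
    exact (List.take_sublist _ _).countP_le
  · intro hcount
    by_contra! hlt
    have hdrop : (l.drop i).countP (fun x => t ≤ x) = 0 := by
      refine List.countP_eq_zero.mpr fun x hx => ?_
      obtain ⟨j, hj, rfl⟩ := List.mem_drop_iff_getElem.mp hx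
      simpa using (hl.getElem_ge_getElem_of_le (Nat.le_add_right i j)).trans_lt hlt
    have htake : (l.take i).countP (fun x => t ≤ x) ≤ i :=
      List.countP_le_length.trans (List.length_take_le _ _)
    rw [← List.take_append_drop i l, List.countP_append, hdrop] at hcount
    omega

variable {n : ℕ}

noncomputable def sortDesc (f : Fin n → ℝ) : List ℝ :=
  (List.ofFn f).mergeSort (fun a b => b ≤ a)

lemma sortedGE_sortDesc (f : Fin n → ℝ) : (sortDesc f).SortedGE :=
  List.sortedGE_mergeSort

lemma perm_sortDesc (f : Fin n → ℝ) : (sortDesc f).Perm (List.ofFn f) :=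
  List.mergeSort_perm _ _

@[simp]
lemma length_sortDesc (f : Fin n → ℝ) : (sortDesc f).length = n := by
  simp [sortDesc]

lemma orderStatDesc_eq_getElem (f : Fin n → ℝ) {i : ℕ} (hi : i < n) :
    orderStatDesc f i = (sortDesc f)[i]'((length_sortDesc f).symm ▸ hi) :=
  List.getD_eq_getElem _ _ _

lemma orderStatDesc_of_le (f : Fin n → ℝ) {i : ℕ} (hi : n ≤ i) : orderStatDesc f i = 0 :=
  List.getD_eq_default _ _ ((length_sortDesc f).trans_le hi)

lemma orderStatDesc_mem_range (f : Fin n → ℝ) {i : ℕ} (hi : i < n) :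
    orderStatDesc f i ∈ Set.range f := by
  rw [orderStatDesc_eq_getElem f hi, Set.mem_range, ← List.mem_ofFn]
  exact (perm_sortDesc f).subset (List.getElem_mem _)

lemma orderStatDesc_nonneg {f : Fin n → ℝ} (hf : ∀ j, 0 ≤ f j) (i : ℕ) :
    0 ≤ orderStatDesc f i := by
  rcases lt_or_ge i n with hi | hi
  · obtain ⟨j, hj⟩ := orderStatDesc_mem_range f hi
    exact hj ▸ hf j
  · exact (orderStatDesc_of_le f hi).ge

lemma orderStatDesc_antitoneOn (f : Fin n → ℝ) : AntitoneOn (orderStatDesc f) (Set.Iio n) :=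
  fun i hi j hj hij => by
    rw [orderStatDesc_eq_getElem f hi, orderStatDesc_eq_getElem f hj]
    exact (sortedGE_sortDesc f).getElem_ge_getElem_of_le hij

lemma le_orderStatDesc_iff (f : Fin n → ℝ) {i : ℕ} (hi : i < n) (t : ℝ) :
    t ≤ orderStatDesc f i ↔ i < #{j | t ≤ f j} := by
  rw [orderStatDesc_eq_getElem f hi, (sortedGE_sortDesc f).le_getElem_iff_lt_countP,
    (perm_sortDesc f).countP_eq, ← Multiset.coe_countP, ← Fin.univ_val_map, Multiset.countP_map,
    card_def, filter_val]

lemma orderStatDesc_mono {f g : Fin n → ℝ} (h : ∀ j, f j ≤ g j) (i : ℕ) :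
    orderStatDesc f i ≤ orderStatDesc g i := by
  rcases lt_or_ge i n with hi | hi
  · have hcard : #{j | orderStatDesc f i ≤ f j} ≤ #{j | orderStatDesc f i ≤ g j} :=
      card_le_card fun j hj => mem_filter.mpr ⟨mem_univ j, (mem_filter.mp hj).2.trans (h j)⟩
    exact (le_orderStatDesc_iff g hi _).mpr
      (((le_orderStatDesc_iff f hi _).mp le_rfl).trans_le hcard)
  · rw [orderStatDesc_of_le f hi, orderStatDesc_of_le g hi]

lemma orderStatDesc_comp {φ : ℝ → ℝ} (f : Fin n → ℝ) (hφ : MonotoneOn φ (Set.range f))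
    {i : ℕ} (hi : i < n) : orderStatDesc (fun j => φ (f j)) i = φ (orderStatDesc f i) := by
  have hsort : sortDesc (fun j => φ (f j)) = (sortDesc f).map φ := by
    refine List.Perm.eq_of_sortedGE (sortedGE_sortDesc _) ?_ ?_
    · rw [List.sortedGE_iff_pairwise, List.pairwise_map]
      refine (sortedGE_sortDesc f).pairwise.imp_of_mem fun ha hb hab => hφ ?_ ?_ hab <;>
        exact List.mem_ofFn.mp ((perm_sortDesc f).subset ‹_›)
    · have hofFn : List.ofFn (fun j => φ (f j)) = (List.ofFn f).map φ := List.map_ofFn.symm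
      exact (perm_sortDesc _).trans (hofFn ▸ ((perm_sortDesc f).map φ).symm)
  rw [orderStatDesc_eq_getElem _ hi, orderStatDesc_eq_getElem f hi]
  simp only [hsort, List.getElem_map]

end OrderStatistics

section ErrorTransfer

variable {n : ℕ} {f g : Fin n → ℝ} {M : ℝ}

lemma orderStatDesc_sq (hg : ∀ j, 0 ≤ g j) {i : ℕ} (hi : i < n) :
    orderStatDesc (fun j => g j ^ 2) i = orderStatDesc g i ^ 2 := by
  have hsq : MonotoneOn (fun x : ℝ => x ^ 2) (Set.Ici 0) := fun x hx _ _ hxy =>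
    pow_le_pow_left₀ hx hxy 2
  exact orderStatDesc_comp g (hsq.mono (Set.range_subset_iff.mpr hg)) hi

lemma sq_orderStatDesc_le (hf : ∀ j, 0 ≤ f j) (hg : ∀ j, 0 ≤ g j) (hM0 : 0 ≤ M)
    (h : ∀ j, g j ^ 2 ≤ f j ^ 2 + (M * f j ^ 2 + M * f j + M)) {i : ℕ} (hi : i < n) :
    orderStatDesc g i ^ 2 ≤
      orderStatDesc f i ^ 2 + (M * orderStatDesc f i ^ 2 + M * orderStatDesc f i + M) := by
  have hmono : MonotoneOn (fun x : ℝ => x ^ 2 + (M * x ^ 2 + M * x + M)) (Set.Ici 0) :=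
    fun x (hx : 0 ≤ x) y _ hxy => by dsimp only; gcongr
  calc orderStatDesc g i ^ 2 = orderStatDesc (fun j => g j ^ 2) i := (orderStatDesc_sq hg hi).symm
    _ ≤ orderStatDesc (fun j => f j ^ 2 + (M * f j ^ 2 + M * f j + M)) i := orderStatDesc_mono h i
    _ = _ := orderStatDesc_comp f (hmono.mono (Set.range_subset_iff.mpr hf)) hi

lemma sq_sub_le_sq_orderStatDesc (hg : ∀ j, 0 ≤ g j) (hM1 : M < 1)
    (h : ∀ j, f j ^ 2 - (M * f j ^ 2 + M * f j + M) ≤ g j ^ 2) {i : ℕ} (hi : i < n)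
    (hc : M / (2 * (1 - M)) ≤ orderStatDesc f i) :
    orderStatDesc f i ^ 2 - (M * orderStatDesc f i ^ 2 + M * orderStatDesc f i + M) ≤
      orderStatDesc g i ^ 2 := by
  have h1M : 0 < 1 - M := by linarith
  set c := M / (2 * (1 - M))
  set q : ℝ → ℝ := fun y => y ^ 2 - (M * y ^ 2 + M * y + M)
  have hvertex : ∀ y, q y = (1 - M) * (y - c) ^ 2 + q c := by
    intro y
    simp only [q, c]
    field_simp [h1M.ne']
    ring
  have hmono : Monotone fun y => q (max y c) := fun x y hxy => by
    simp only [hvertex (max x c), hvertex (max y c)]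
    gcongr
    exact sub_nonneg.mpr (le_max_right x c)
  have hle : ∀ y, q (max y c) ≤ q y := fun y => by
    rw [hvertex (max y c), hvertex y]
    rcases le_total y c with hyc | hcy
    · rw [max_eq_right hyc, sub_self, zero_pow two_ne_zero, mul_zero, zero_add]
      exact le_add_of_nonneg_left (mul_nonneg h1M.le (sq_nonneg _))
    · rw [max_eq_left hcy]
  calc q (orderStatDesc f i) = q (max (orderStatDesc f i) c) := by rw [max_eq_left hc]
    _ = orderStatDesc (fun j => q (max (f j) c)) i :=
        (orderStatDesc_comp f (hmono.monotoneOn _) hi).symm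
    _ ≤ orderStatDesc (fun j => g j ^ 2) i :=
        orderStatDesc_mono (fun j => (hle (f j)).trans (h j)) i
    _ = orderStatDesc g i ^ 2 := orderStatDesc_sq hg hi

theorem abs_sq_orderStatDesc_sub_le (hf : ∀ j, 0 ≤ f j) (hg : ∀ j, 0 ≤ g j) (hM0 : 0 ≤ M)
    (hM1 : M < 1) (h : ∀ j, |g j ^ 2 - f j ^ 2| ≤ M * f j ^ 2 + M * f j + M) {i : ℕ} (hi : i < n)
    (hc : M / (2 * (1 - M)) ≤ orderStatDesc f i) :
    |orderStatDesc g i ^ 2 - orderStatDesc f i ^ 2| ≤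
      M * orderStatDesc f i ^ 2 + M * orderStatDesc f i + M := by
  have hup := sq_orderStatDesc_le hf hg hM0 (fun j => by linarith [(abs_le.mp (h j)).2]) hi
  have hlow := sq_sub_le_sq_orderStatDesc hg hM1 (fun j => by linarith [(abs_le.mp (h j)).1]) hi hc
  exact abs_le.mpr ⟨by linarith, by linarith⟩

end ErrorTransfer

section LogRatio

open Real

lemma abs_log_le_of_abs_sub_one_le {a t : ℝ} (ha : a < 1) (ht : |t - 1| ≤ a) :
    |log t| ≤ log (1 / (1 - a)) := by
  obtain ⟨hlow, hup⟩ := abs_le.mp ht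
  have h1a : 0 < 1 - a := by linarith
  rw [abs_le, one_div, log_inv, neg_neg, ← log_inv]
  constructor
  · exact log_le_log h1a (by linarith)
  · refine log_le_log (by linarith) ?_
    rw [← one_div, le_div_iff₀ h1a]
    nlinarith

lemma abs_log_div_sub_log_div_le_of_abs_sq_sub_le {e f r s a : ℝ} (ha : a < 1) (hr : 0 < r)
    (hs : 0 < s) (he : 0 ≤ e) (hf : 0 ≤ f) (her : |e ^ 2 - r ^ 2| ≤ a * r ^ 2)
    (hfs : |f ^ 2 - s ^ 2| ≤ a * s ^ 2) :
    |log (e / f) - log (r / s)| ≤ log (1 / (1 - a)) := by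
  have hpair : ∀ {x y : ℝ}, 0 < y → 0 ≤ x → |x ^ 2 - y ^ 2| ≤ a * y ^ 2 →
      0 < x ∧ |log (x ^ 2 / y ^ 2)| ≤ log (1 / (1 - a)) := by
    intro x y hy hx hxy
    have hy2 : 0 < y ^ 2 := by positivity
    have hratio : |x ^ 2 / y ^ 2 - 1| ≤ a := by
      rwa [div_sub_one hy2.ne', abs_div, abs_of_pos hy2, div_le_iff₀ hy2]
    refine ⟨hx.lt_of_ne fun hx0 => ?_, abs_log_le_of_abs_sub_one_le ha hratio⟩
    rw [← hx0, zero_pow two_ne_zero, zero_sub, abs_neg, abs_of_pos hy2] at hxy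
    nlinarith
  obtain ⟨he', hE⟩ := hpair hr he her
  obtain ⟨hf', hF⟩ := hpair hs hf hfs
  have hsplit : log (e / f) - log (r / s) = (log (e ^ 2 / r ^ 2) - log (f ^ 2 / s ^ 2)) / 2 := by
    rw [log_div he'.ne' hf'.ne', log_div hr.ne' hs.ne', log_div (by positivity) (by positivity),
      log_div (by positivity) (by positivity), log_pow, log_pow, log_pow, log_pow]
    ring
  rw [hsplit, abs_div, abs_two]
  linarith [abs_sub (log (e ^ 2 / r ^ 2)) (log (f ^ 2 / s ^ 2))]

theorem abs_log_div_sub_log_div_le {e f r s M a : ℝ} (hM0 : 0 ≤ M) (hM1 : M < 1)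
    (hs : M / (2 * (1 - M)) ≤ s) (hsr : s ≤ r) (he : 0 ≤ e) (hf : 0 ≤ f)
    (her : |e ^ 2 - r ^ 2| ≤ M * r ^ 2 + M * r + M)
    (hfs : |f ^ 2 - s ^ 2| ≤ M * s ^ 2 + M * s + M)
    (ha : a = M + M / s + M / s ^ 2) (ha1 : a < 1) :
    |log (e / f) - log (r / s)| ≤ log (1 / (1 - a)) := by
  have hc0 : 0 ≤ M / (2 * (1 - M)) := div_nonneg hM0 (by linarith)
  rcases (hc0.trans hs).eq_or_lt with hs0 | hs0
  · -- `s = 0` forces `M = 0` and then `f = 0`: both quotients are the junk value `x / 0 = 0`.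
    have hM : M = 0 := by
      rw [← hs0, div_le_iff₀ (by linarith), zero_mul] at hs
      linarith
    have hf0 : f = 0 := by simpa [← hs0, hM] using hfs
    simp [← hs0, hf0, ha, hM]
  · have hr0 := hs0.trans_le hsr
    have hrs : 1 ≤ r / s := (one_le_div hs0).mpr hsr
    refine abs_log_div_sub_log_div_le_of_abs_sq_sub_le ha1 hr0 hs0 he hf
      (her.trans ?_) (hfs.trans ?_)
    · have h1 : M * r ≤ M * r * (r / s) := le_mul_of_one_le_right (by positivity) hrs
      have h2 : M ≤ M * (r / s) ^ 2 := le_mul_of_one_le_right hM0 (one_le_pow₀ hrs)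
      calc M * r ^ 2 + M * r + M ≤ M * r ^ 2 + M * r * (r / s) + M * (r / s) ^ 2 := by linarith
        _ = a * r ^ 2 := by rw [ha]; field_simp
    · exact le_of_eq (by rw [ha]; field_simp)

end LogRatio

theorem abs_log_ratio_diff_le_general {d n : ℕ}
    (X : Fin n → EuclideanSpace ℝ (Fin d))
    (μ μhat : EuclideanSpace ℝ (Fin d)) (S Shat : Matrix (Fin d) (Fin d) ℝ)
    (hSpd : S.PosDef) (hShatpd : Shat.PosDef)
    (lammax : ℝ) (hmax : IsGreatest (Set.range hSpd.isHermitian.eigenvalues) lammax)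
    (A B C M : ℝ)
    (hA : A = matOpNorm (S⁻¹ - Shat⁻¹))
    (hB : B = (‖μhat‖ + ‖μ‖) * matOpNorm (S⁻¹ - Shat⁻¹)
      + (matOpNorm Shat⁻¹ + matOpNorm S⁻¹) * ‖μ - μhat‖)
    (hC : C = ‖μ‖ ^ 2 * matOpNorm (S⁻¹ - Shat⁻¹)
      + (‖μ‖ + ‖μhat‖) * matOpNorm Shat⁻¹ * ‖μ - μhat‖)
    (hM : M = max (max (lammax * A) (Real.sqrt lammax * (2 * ‖μ‖ * A + B)))
      (A * ‖μ‖ ^ 2 + B * ‖μ‖ + C))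
    (R E : Fin n → ℝ)
    (hR : ∀ i, R i = mahalanobis S (X i) μ)
    (hE : ∀ i, E i = mahalanobis Shat (X i) μhat)
    (l : ℕ) (hln : l ≤ n)
    (hM1 : M < 1)
    (hRl : M / (2 * (1 - M)) ≤ orderStatDesc R (l - 1))
    (a : ℝ)
    (ha : a = M + M / orderStatDesc R (l - 1) + M / (orderStatDesc R (l - 1)) ^ 2)
    (ha1 : a < 1) :
    ∀ i : ℕ, 1 ≤ i → i ≤ l →
      |Real.log (orderStatDesc E (i - 1) / orderStatDesc E (l - 1))
        - Real.log (orderStatDesc R (i - 1) / orderStatDesc R (l - 1))| ≤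
        Real.log (1 / (1 - a)) := by
  intro i hi1 hil
  obtain ⟨k, hk⟩ := hmax.1
  have hlam : 0 < lammax := hk ▸ hSpd.eigenvalues_pos k
  have hMA : lammax * A ≤ M := hM ▸ (le_max_left _ _).trans (le_max_left _ _)
  have hMB : √lammax * (2 * ‖μ‖ * A + B) ≤ M := hM ▸ (le_max_right _ _).trans (le_max_left _ _)
  have hMC : A * ‖μ‖ ^ 2 + B * ‖μ‖ + C ≤ M := hM ▸ le_max_right _ _
  have hM0 : 0 ≤ M := (mul_nonneg hlam.le (hA ▸ norm_nonneg _)).trans hMA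
  have hpoint : ∀ j, |E j ^ 2 - R j ^ 2| ≤ M * R j ^ 2 + M * R j + M := fun j => by
    rw [hE, hR]
    exact abs_sq_mahalanobis_sub_le hSpd hShatpd hlam (fun k => hmax.2 ⟨k, rfl⟩) hA hB hC
      hMA hMB hMC (X j)
  have hR0 : ∀ j, 0 ≤ R j := fun j => hR j ▸ mahalanobis_nonneg _ _ _
  have hE0 : ∀ j, 0 ≤ E j := fun j => hE j ▸ mahalanobis_nonneg _ _ _
  have horder : ∀ k < n, M / (2 * (1 - M)) ≤ orderStatDesc R k →
      |orderStatDesc E k ^ 2 - orderStatDesc R k ^ 2| ≤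
        M * orderStatDesc R k ^ 2 + M * orderStatDesc R k + M :=
    fun k hk hc => abs_sq_orderStatDesc_sub_le hR0 hE0 hM0 hM1 hpoint hk hc
  have hsr : orderStatDesc R (l - 1) ≤ orderStatDesc R (i - 1) :=
    orderStatDesc_antitoneOn R (Set.mem_Iio.mpr (by omega)) (Set.mem_Iio.mpr (by omega))
      (by omega)
  exact abs_log_div_sub_log_div_le hM0 hM1 hRl hsr (orderStatDesc_nonneg hE0 _)
    (orderStatDesc_nonneg hE0 _) (horder _ (by omega) (hRl.trans hsr)) (horder _ (by omega) hRl)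
    ha ha1

/-- Lemma (uniform bound on log-ratio differences): in the setting of the ε-bound lemma,
if `M < 1`, `R_{(l,n)} ≥ M/(2(1−M))` and `a = M + M/R_{(l,n)} + M/R_{(l,n)}² < 1`, then for
all `1 ≤ i ≤ l`,
`|log(E_{(i,n)}/E_{(l,n)}) − log(R_{(i,n)}/R_{(l,n)})| ≤ log(1/(1−a))`. -/
theorem abs_log_ratio_diff_le {d n : ℕ}
    (X : Fin n → EuclideanSpace ℝ (Fin d))
    (μ μhat : EuclideanSpace ℝ (Fin d)) (S Shat : Matrix (Fin d) (Fin d) ℝ)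
    (hSpd : S.PosDef) (hShatpd : Shat.PosDef)
    (lammax : ℝ) (hmax : IsGreatest (Set.range hSpd.isHermitian.eigenvalues) lammax)
    (A B C M : ℝ)
    (hA : A = matOpNorm (S⁻¹ - Shat⁻¹))
    (hB : B = (‖μhat‖ + ‖μ‖) * matOpNorm (S⁻¹ - Shat⁻¹)
      + (matOpNorm Shat⁻¹ + matOpNorm S⁻¹) * ‖μ - μhat‖)
    (hC : C = ‖μ‖ ^ 2 * matOpNorm (S⁻¹ - Shat⁻¹)
      + (‖μ‖ + ‖μhat‖) * matOpNorm Shat⁻¹ * ‖μ - μhat‖)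
    (hM : M = max (max (lammax * A) (Real.sqrt lammax * (2 * ‖μ‖ * A + B)))
      (A * ‖μ‖ ^ 2 + B * ‖μ‖ + C))
    (R E : Fin n → ℝ)
    (hR : ∀ i, R i = mahalanobis S (X i) μ)
    (hE : ∀ i, E i = mahalanobis Shat (X i) μhat)
    (l : ℕ) (hl1 : 1 ≤ l) (hln : l ≤ n)
    (hM1 : M < 1)
    (hRl : M / (2 * (1 - M)) ≤ orderStatDesc R (l - 1))
    (a : ℝ)
    (ha : a = M + M / orderStatDesc R (l - 1) + M / (orderStatDesc R (l - 1)) ^ 2)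
    (ha1 : a < 1) :
    ∀ i : ℕ, 1 ≤ i → i ≤ l →
      |Real.log (orderStatDesc E (i - 1) / orderStatDesc E (l - 1))
        - Real.log (orderStatDesc R (i - 1) / orderStatDesc R (l - 1))| ≤
        Real.log (1 / (1 - a)) :=
  abs_log_ratio_diff_le_general X μ μhat S Shat hSpd hShatpd lammax hmax A B C M hA hB hC hM R E hR
    hE l hln hM1 hRl a ha ha1
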